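/- arXiv:0912.3241 — 2 statements merged into one kernel-verified Lean document; each statement's English description precedes it below -/
import Mathlib

section
/- Let Q(x,z) ∈ ℂ[x,z] be a polynomial such that deg_z Q(0,z) ≥ 2, and let S_{Q,1} = ℂ[x,y,z]/(x·y − Q(x,z)). Then the Makar-Limanov invariant of S_{Q,1}, i.e. the intersection of the kernels of all locally nilpotent ℂ-derivations of S_{Q,1}, is exactly ℂ (the image of the constants). -/
/-!
On the open subset `x ≠ 0` the surface `x y = Q(x,z)` is `ℂ* × ℂ` with coordinates `(t, z)`,
so `S_{Q,1}` embeds into `ℂ[t,t⁻¹][z]` via `x ↦ t`, `y ↦ t⁻¹ Q(t,z)`, `z ↦ z`. There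
the locally nilpotent derivation `x ∂_z + Q_z ∂_y` becomes `t ∂_z`, so its kernel consists of
elements `a` with `x^n a = b(x)` for a polynomial `b`; evaluating at a point `(0, 0, z₀)` of
the surface, where `Q(0, z₀) = 0`, strips the powers of `x`, and the kernel is `ℂ[x]`. Writing
`Q = p(z) + x r(x,z)`, a second locally nilpotent derivation sends `x` to `p'(z)`, hence `b(x)`
to `b'(x) p'(z)`, which vanishes only for constant `b` because `deg p ≥ 1`.
-/

open MvPolynomial

noncomputable section

/-- The polynomial ring `ℂ[x,y,z]`, with `X 0 = x`, `X 1 = y`, `X 2 = z`. -/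
abbrev R3 := MvPolynomial (Fin 3) ℂ

/-- The polynomial ring `ℂ[x,z]`, with `X 0 = x`, `X 1 = z`. -/
abbrev R2 := MvPolynomial (Fin 2) ℂ

/-- The embedding `ℂ[x,z] → ℂ[x,y,z]`, `x ↦ x`, `z ↦ z`. -/
def toXYZ : R2 →ₐ[ℂ] R3 := aeval ![X 0, X 2]

/-- The defining polynomial `x^n y - Q(x,z)` of the Danielewski hypersurface `X_{Q,n}`. -/
def danPoly (Q : R2) (n : ℕ) : R3 := X 0 ^ n * X 1 - toXYZ Q

/-- The coordinate ring `S_{Q,n} = ℂ[x,y,z]/(x^n y - Q(x,z))`. -/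
abbrev danRing (Q : R2) (n : ℕ) := R3 ⧸ Ideal.span {danPoly Q n}

/-- The quotient projection `ℂ[x,y,z] → S_{Q,n}`. -/
def danProj (Q : R2) (n : ℕ) : R3 →ₐ[ℂ] danRing Q n := Ideal.Quotient.mkₐ ℂ _

/-- `Q(0,z)` as a univariate polynomial in `z`. -/
def Q0 (Q : R2) : Polynomial ℂ := aeval ![0, Polynomial.X] Q

/-- A derivation is locally nilpotent if every element is killed by some iterate. -/
def IsLND {A : Type*} [CommRing A] [Algebra ℂ A] (δ : Derivation ℂ A A) : Prop :=
  ∀ a : A, ∃ m : ℕ, 1 ≤ m ∧ (⇑δ)^[m] a = 0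

/-- Two Danielewski hypersurfaces are equivalent if some algebra automorphism of
`ℂ[x,y,z]` maps the ideal `(x^{n₁} y - Q₁)` onto the ideal `(x^{n₂} y - Q₂)`. -/
def DanEquiv (Q₁ : R2) (n₁ : ℕ) (Q₂ : R2) (n₂ : ℕ) : Prop :=
  ∃ Φ : R3 ≃ₐ[ℂ] R3,
    Ideal.map Φ.toAlgHom.toRingHom (Ideal.span {danPoly Q₁ n₁}) = Ideal.span {danPoly Q₂ n₂}

/-- `X_{Q,n}` is in standard form if `Q = p(z) + x q(x,z)` with `deg_z q < deg p`. -/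
def IsStandardForm (Q : R2) : Prop :=
  ∃ (p : Polynomial ℂ) (q : R2),
    Q = Polynomial.aeval (X 1) p + X 0 * q ∧ (q = 0 ∨ degreeOf 1 q < p.natDegree)

/-- `X_{Q,n}` is in reduced standard form if moreover `deg_x Q < n` and
`deg_z q < deg p - 1`. -/
def IsReducedStandardForm (Q : R2) (n : ℕ) : Prop :=
  degreeOf 0 Q < n ∧
  ∃ (p : Polynomial ℂ) (q : R2),
    Q = Polynomial.aeval (X 1) p + X 0 * q ∧ (q = 0 ∨ degreeOf 1 q < p.natDegree - 1)


namespace Derivation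

variable {R A : Type*} [CommRing R] [CommRing A] [Algebra R A] (δ : Derivation R A A)

theorem iterate_add_eq_zero {a : A} {m : ℕ} (k : ℕ) (h : δ^[m] a = 0) : δ^[k + m] a = 0 := by
  rw [Function.iterate_add_apply, h, iterate_map_zero]

theorem iterate_add_mul_eq_zero {a b : A} {m n : ℕ} (ha : δ^[m] a = 0) (hb : δ^[n] b = 0) :
    δ^[m + n] (a * b) = 0 := by
  induction m generalizing a b n with
  | zero => rw [Function.iterate_zero_apply] at ha; rw [ha, zero_mul, iterate_map_zero]
  | succ m ihm =>
    induction n generalizing a b with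
    | zero => rw [Function.iterate_zero_apply] at hb; rw [hb, mul_zero, iterate_map_zero]
    | succ n ihn =>
      have h₁ : δ^[m + 1 + n] (a * δ b) = 0 := ihn ha (by rwa [← Function.iterate_succ_apply])
      have h₂ : δ^[m + 1 + n] (b * δ a) = 0 := by
        rw [add_right_comm, mul_comm]
        exact ihm (by rwa [← Function.iterate_succ_apply]) hb
      rw [← add_assoc, Function.iterate_succ_apply, leibniz, smul_eq_mul, smul_eq_mul,
        iterate_map_add, h₁, h₂, add_zero]

def nilpotentSubalgebra : Subalgebra R A where
  carrier := {a | ∃ n, δ^[n] a = 0}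
  mul_mem' := fun ⟨m, hm⟩ ⟨n, hn⟩ => ⟨m + n, δ.iterate_add_mul_eq_zero hm hn⟩
  add_mem' := fun ⟨m, hm⟩ ⟨n, hn⟩ => ⟨n + m, by
    rw [iterate_map_add, δ.iterate_add_eq_zero n hm, add_comm n, δ.iterate_add_eq_zero m hn,
      add_zero]⟩
  algebraMap_mem' r := ⟨1, δ.map_algebraMap r⟩

theorem mem_nilpotentSubalgebra_of_map_mem {a : A} (h : δ a ∈ δ.nilpotentSubalgebra) :
    a ∈ δ.nilpotentSubalgebra :=
  let ⟨n, hn⟩ := h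
  ⟨n + 1, by rwa [Function.iterate_succ_apply]⟩

theorem map_mem_span_singleton {g : A} (hg : δ g ∈ Ideal.span {g}) :
    ∀ a ∈ Ideal.span {g}, δ a ∈ Ideal.span {g} := by
  intro a ha
  obtain ⟨t, rfl⟩ := Ideal.mem_span_singleton'.mp ha
  rw [leibniz, smul_eq_mul, smul_eq_mul]
  exact add_mem (Ideal.mul_mem_left _ _ hg)
    (Ideal.mul_mem_right _ _ (Ideal.mem_span_singleton_self g))

variable (I : Ideal A) (hI : ∀ a ∈ I, δ a ∈ I)

def quotient : Derivation R (A ⧸ I) (A ⧸ I) :=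
  Derivation.mk' ((I.restrictScalars R).mapQ (I.restrictScalars R) δ.toLinearMap hI) <| by
    rintro ⟨a⟩ ⟨b⟩
    exact congrArg (Ideal.Quotient.mk I) (δ.leibniz a b)

theorem quotient_mk (a : A) :
    δ.quotient I hI (Ideal.Quotient.mk I a) = Ideal.Quotient.mk I (δ a) :=
  rfl

theorem iterate_quotient_mk (n : ℕ) (a : A) :
    (δ.quotient I hI)^[n] (Ideal.Quotient.mk I a) = Ideal.Quotient.mk I (δ^[n] a) := by
  induction n generalizing a with
  | zero => rfl
  | succ n ih => rw [Function.iterate_succ_apply, Function.iterate_succ_apply, quotient_mk, ih]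

end Derivation

section LocallyNilpotent

variable {A : Type*} [CommRing A] [Algebra ℂ A] {δ : Derivation ℂ A A}

theorem isLND_of_subset_nilpotentSubalgebra {s : Set A} (hs : Algebra.adjoin ℂ s = ⊤)
    (h : s ⊆ δ.nilpotentSubalgebra) : IsLND δ := fun a =>
  have ⟨n, hn⟩ : a ∈ δ.nilpotentSubalgebra := Algebra.adjoin_le h (hs ▸ Algebra.mem_top)
  ⟨n + 1, n.succ_pos, by rw [Function.iterate_succ_apply', hn, map_zero]⟩

theorem isLND_of_X_mem_nilpotentSubalgebra {σ : Type*}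
    {δ : Derivation ℂ (MvPolynomial σ ℂ) (MvPolynomial σ ℂ)}
    (h : ∀ i, X i ∈ δ.nilpotentSubalgebra) : IsLND δ :=
  isLND_of_subset_nilpotentSubalgebra adjoin_range_X (Set.range_subset_iff.mpr h)

theorem IsLND.quotient (hδ : IsLND δ) (I : Ideal A) (hI : ∀ a ∈ I, δ a ∈ I) :
    IsLND (δ.quotient I hI) := by
  rintro ⟨a⟩
  obtain ⟨n, hn, h⟩ := hδ a
  exact ⟨n, hn, (δ.iterate_quotient_mk I hI n a).trans (by rw [h, map_zero])⟩

end LocallyNilpotent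

theorem Derivation.map_mvPolynomial_aeval {R A M σ : Type*} [CommRing R] [CommRing A]
    [Algebra R A] [AddCommGroup M] [Module A M] [Module R M] [Fintype σ] (D : Derivation R A M)
    (v : σ → A) (F : MvPolynomial σ R) :
    D (aeval v F) = ∑ i, aeval v (pderiv i F) • D (v i) := by
  classical
  induction F using MvPolynomial.induction_on with
  | C a => simp
  | add p q hp hq => simp [hp, hq, Finset.sum_add_distrib, add_smul]
  | mul_X p j hp =>
    simp [hp, Pi.single_apply, Finset.sum_add_distrib, add_smul, Finset.smul_sum, mul_smul,
      apply_ite, ite_smul]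

theorem MvPolynomial.X_dvd_sub_aeval_update_zero {σ R : Type*} [CommRing R] [DecidableEq σ]
    (i : σ) (p : MvPolynomial σ R) : X i ∣ p - aeval (Function.update X i 0) p := by
  rw [← Ideal.mem_span_singleton, ← Ideal.Quotient.eq]
  have : (Ideal.Quotient.mkₐ R (Ideal.span {X i})).comp (aeval (Function.update X i 0)) =
      Ideal.Quotient.mkₐ R _ := by
    refine algHom_ext fun j => ?_
    rcases eq_or_ne j i with rfl | hj
    · simp
    · simp [hj]
  exact (DFunLike.congr_fun this p).symm

theorem MvPolynomial.aeval_X_injective {σ R : Type*} [CommRing R] (i : σ) :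
    Function.Injective (Polynomial.aeval (R := R) (X i : MvPolynomial σ R)) :=
  Function.LeftInverse.injective (g := aeval (R := R) fun _ : σ => Polynomial.X) fun p => by
    rw [← Polynomial.aeval_algHom_apply, aeval_X, Polynomial.aeval_X_left_apply]

theorem Subalgebra.mvPolynomial_aeval_mem {R A σ : Type*} [CommRing R] [CommRing A] [Algebra R A]
    (S : Subalgebra R A) {v : σ → A} (hv : ∀ i, v i ∈ S) (F : MvPolynomial σ R) :
    aeval v F ∈ S :=
  Algebra.adjoin_le (Set.range_subset_iff.mpr hv)
    ((Algebra.adjoin_range_eq_range_aeval R v).symm ▸ ⟨F, rfl⟩)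

theorem Subalgebra.polynomial_aeval_mem {R A : Type*} [CommRing R] [CommRing A] [Algebra R A]
    (S : Subalgebra R A) {a : A} (ha : a ∈ S) (p : Polynomial R) : Polynomial.aeval a p ∈ S :=
  Polynomial.aeval_subalgebra_coe p S ⟨a, ha⟩ ▸ Subtype.prop _

theorem Subalgebra.exists_pow_mul_mem {R A : Type*} [CommRing R] [CommRing A] [Algebra R A]
    (B : Subalgebra R A) {x : A} (hx : x ∈ B) {s : Set A} (hs : Algebra.adjoin R s = ⊤)
    (h : ∀ a ∈ s, ∃ m : ℕ, x ^ m * a ∈ B) (a : A) : ∃ m : ℕ, x ^ m * a ∈ B := by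
  have ha : a ∈ Algebra.adjoin R s := hs ▸ Algebra.mem_top
  induction ha using Algebra.adjoin_induction with
  | mem a ha => exact h a ha
  | algebraMap r => exact ⟨0, by simp⟩
  | add a b _ _ ha hb =>
    obtain ⟨m, hm⟩ := ha
    obtain ⟨n, hn⟩ := hb
    refine ⟨n + m, ?_⟩
    rw [mul_add, pow_add]
    exact B.add_mem (mul_assoc (x ^ n) _ a ▸ B.mul_mem (B.pow_mem hx n) hm)
      (mul_right_comm (x ^ n) _ b ▸ B.mul_mem hn (B.pow_mem hx m))
  | mul a b _ _ ha hb =>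
    obtain ⟨m, hm⟩ := ha
    obtain ⟨n, hn⟩ := hb
    exact ⟨m + n, by rw [pow_add, mul_mul_mul_comm]; exact B.mul_mem hm hn⟩

open scoped LaurentPolynomial Polynomial
open LaurentPolynomial (T)

instance : IsAddTorsionFree ℂ[T;T⁻¹] := .of_module_rat _

theorem map_eq_aeval_Q0_of_map_X0_eq_zero {B : Type*} [CommRing B] [Algebra ℂ B]
    (φ : R2 →ₐ[ℂ] B) (hφ : φ (X 0) = 0) (Q : R2) :
    φ Q = Polynomial.aeval (φ (X 1)) (Q0 Q) := by
  have h :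
      (Polynomial.aeval (φ (X 1))).comp (aeval ![0, Polynomial.X] : R2 →ₐ[ℂ] ℂ[X]) = φ :=
    algHom_ext fun i => by fin_cases i <;> simp [hφ]
  rw [Q0, ← AlgHom.comp_apply, h]

theorem exists_eq_aeval_Q0_add_X0_mul (Q : R2) :
    ∃ r : R2, Q = Polynomial.aeval (X 1) (Q0 Q) + X 0 * r := by
  obtain ⟨r, hr⟩ := X_dvd_sub_aeval_update_zero 0 Q
  have hQ0 := map_eq_aeval_Q0_of_map_X0_eq_zero (aeval (Function.update X 0 0) : R2 →ₐ[ℂ] R2)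
    (by rw [aeval_X, Function.update_self]) Q
  rw [aeval_X, Function.update_of_ne (by decide)] at hQ0
  exact ⟨r, by linear_combination hr + hQ0⟩

def bivariateToLaurent : R2 →ₐ[ℂ] ℂ[T;T⁻¹][X] :=
  (Polynomial.mapAlgHom Polynomial.toLaurentAlg).comp
    (Polynomial.Bivariate.equivMvPolynomial ℂ).symm.toAlgHom

@[simp] theorem bivariateToLaurent_X0 : bivariateToLaurent (X 0) = Polynomial.C (T 1) := by
  simp [bivariateToLaurent]

@[simp] theorem bivariateToLaurent_X1 : bivariateToLaurent (X 1) = Polynomial.X := by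
  simp [bivariateToLaurent]

theorem bivariateToLaurent_injective : Function.Injective bivariateToLaurent :=
  (Polynomial.map_injective _ Polynomial.toLaurent_injective).comp
    (Polynomial.Bivariate.equivMvPolynomial ℂ).symm.injective

theorem derivative_bivariateToLaurent (F : R2) :
    Polynomial.derivative (bivariateToLaurent F) = bivariateToLaurent (pderiv 1 F) := by
  obtain ⟨G, rfl⟩ := (Polynomial.Bivariate.equivMvPolynomial ℂ).surjective F
  simp [bivariateToLaurent, Polynomial.Bivariate.pderiv_one_equivMvPolynomial,
    Polynomial.derivative_map]

@[simp] theorem toXYZ_X0 : toXYZ (X 0) = X 0 := by simp [toXYZ]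

@[simp] theorem toXYZ_X1 : toXYZ (X 1) = X 2 := by simp [toXYZ]

/-- Functions on `X_{Q,1}` restricted to its open subset `x ≠ 0`, parametrized by
`(t, z) ↦ (t, Q(t,z)/t, z)`. -/
def danToLaurent (Q : R2) : R3 →ₐ[ℂ] ℂ[T;T⁻¹][X] :=
  aeval ![Polynomial.C (T 1), Polynomial.C (T (-1)) * bivariateToLaurent Q, Polynomial.X]

section Embedding

variable (Q : R2)

@[simp] theorem danToLaurent_X0 : danToLaurent Q (X 0) = Polynomial.C (T 1) := by
  simp [danToLaurent]

@[simp] theorem danToLaurent_X1 :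
    danToLaurent Q (X 1) = Polynomial.C (T (-1)) * bivariateToLaurent Q := by
  simp [danToLaurent]

@[simp] theorem danToLaurent_X2 : danToLaurent Q (X 2) = Polynomial.X := by
  simp [danToLaurent]

@[simp] theorem danToLaurent_toXYZ (F : R2) :
    danToLaurent Q (toXYZ F) = bivariateToLaurent F := by
  rw [← AlgHom.comp_apply]
  congr 1
  refine algHom_ext fun i => ?_
  fin_cases i <;> simp

theorem C_T_one_mul_C_T_neg_one :
    (Polynomial.C (T 1) * Polynomial.C (T (-1)) : ℂ[T;T⁻¹][X]) = 1 := by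
  rw [← Polynomial.C_mul, ← LaurentPolynomial.T_add]; simp

theorem danToLaurent_danPoly : danToLaurent Q (danPoly Q 1) = 0 := by
  simp [danPoly, ← mul_assoc, C_T_one_mul_C_T_neg_one]

theorem span_danPoly_le_ker_danToLaurent :
    Ideal.span {danPoly Q 1} ≤ RingHom.ker (danToLaurent Q) :=
  (Ideal.span_singleton_le_iff_mem _).mpr (danToLaurent_danPoly Q)

theorem danProj_X0_mul_X1 : danProj Q 1 (X 0) * danProj Q 1 (X 1) = danProj Q 1 (toXYZ Q) := by
  rw [← map_mul, ← sub_eq_zero, ← map_sub, danProj, Ideal.Quotient.mkₐ_eq_mk,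
    Ideal.Quotient.eq_zero_iff_mem, ← pow_one (X 0 : R3)]
  exact Ideal.mem_span_singleton_self _

theorem exists_X0_pow_mul_eq_danProj_toXYZ (a : danRing Q 1) :
    ∃ (m : ℕ) (F : R2), danProj Q 1 (X 0) ^ m * a = danProj Q 1 (toXYZ F) := by
  let B := ((danProj Q 1).comp toXYZ).range
  have hgen : Algebra.adjoin ℂ (Set.range fun i => danProj Q 1 (X i)) = ⊤ := by
    rw [Set.range_comp', ← AlgHom.map_adjoin, adjoin_range_X, Algebra.map_top,
      AlgHom.range_eq_top]
    exact Ideal.Quotient.mk_surjective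
  have hX : ∀ b ∈ Set.range fun i => danProj Q 1 (X i),
      ∃ m : ℕ, danProj Q 1 (X 0) ^ m * b ∈ B := by
    rintro _ ⟨i, rfl⟩
    fin_cases i
    · exact ⟨0, X 0, by simp⟩
    · exact ⟨1, Q, by simp [danProj_X0_mul_X1]⟩
    · exact ⟨0, X 1, by simp⟩
  obtain ⟨m, F, hF⟩ := B.exists_pow_mul_mem ⟨X 0, by simp⟩ hgen hX a
  exact ⟨m, F, hF.symm⟩

theorem aeval_update_zero_danPoly :
    aeval (Function.update X 0 0) (danPoly Q 1) = -Polynomial.aeval (X 2 : R3) (Q0 Q) := by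
  have hQ0 := map_eq_aeval_Q0_of_map_X0_eq_zero
    ((aeval (Function.update X 0 0) : R3 →ₐ[ℂ] R3).comp toXYZ) (by simp) Q
  rw [AlgHom.comp_apply, AlgHom.comp_apply, toXYZ_X1, aeval_X,
    Function.update_of_ne (by decide)] at hQ0
  rw [danPoly, map_sub, hQ0]
  simp

variable {Q}

theorem mem_of_X0_mul_mem (hQ : Q0 Q ≠ 0) {g : R3} (h : X 0 * g ∈ Ideal.span {danPoly Q 1}) :
    g ∈ Ideal.span {danPoly Q 1} := by
  obtain ⟨t, ht⟩ := Ideal.mem_span_singleton'.mp h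
  let e : R3 →ₐ[ℂ] R3 := aeval (Function.update X 0 0)
  have hne : e (danPoly Q 1) ≠ 0 := by
    rw [aeval_update_zero_danPoly, neg_ne_zero]
    exact (map_ne_zero_iff _ (aeval_X_injective 2)).mpr hQ
  have ht0 : e t = 0 := by
    have := congrArg e ht
    rw [map_mul, map_mul, show e (X 0) = 0 by simp [e], zero_mul] at this
    exact (mul_eq_zero.mp this).resolve_right hne
  have hdvd := X_dvd_sub_aeval_update_zero 0 t
  rw [show aeval (Function.update X 0 0) t = e t from rfl, ht0, sub_zero] at hdvd
  obtain ⟨t', rfl⟩ := hdvd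
  refine Ideal.mem_span_singleton'.mpr ⟨t', mul_left_cancel₀ (X_ne_zero 0) ?_⟩
  rw [← ht]; ring

theorem mem_of_X0_pow_mul_mem (hQ : Q0 Q ≠ 0) {g : R3} :
    ∀ {m : ℕ}, X 0 ^ m * g ∈ Ideal.span {danPoly Q 1} → g ∈ Ideal.span {danPoly Q 1}
  | 0, h => by rwa [pow_zero, one_mul] at h
  | m + 1, h =>
    mem_of_X0_pow_mul_mem hQ (mem_of_X0_mul_mem hQ (by rwa [← mul_assoc, ← pow_succ']))

theorem ker_danToLaurent (hQ : Q0 Q ≠ 0) :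
    RingHom.ker (danToLaurent Q) = Ideal.span {danPoly Q 1} := by
  refine le_antisymm (fun f hf => ?_) (span_danPoly_le_ker_danToLaurent Q)
  obtain ⟨m, F, hF⟩ := exists_X0_pow_mul_eq_danProj_toXYZ Q (danProj Q 1 f)
  rw [← map_pow, ← map_mul, danProj, Ideal.Quotient.mkₐ_eq_mk, Ideal.Quotient.eq] at hF
  have hF0 : F = 0 := by
    have := span_danPoly_le_ker_danToLaurent Q hF
    rw [RingHom.mem_ker] at this hf
    exact bivariateToLaurent_injective (by simpa [hf] using this)
  rw [hF0, map_zero, sub_zero] at hF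
  exact mem_of_X0_pow_mul_mem hQ hF

end Embedding

def danEmbedding (Q : R2) : danRing Q 1 →ₐ[ℂ] ℂ[T;T⁻¹][X] :=
  Ideal.Quotient.liftₐ _ (danToLaurent Q) fun _ h => span_danPoly_le_ker_danToLaurent Q h

section DanEmbedding

variable {Q : R2}

@[simp] theorem danEmbedding_danProj (f : R3) :
    danEmbedding Q (danProj Q 1 f) = danToLaurent Q f :=
  rfl

theorem danEmbedding_injective (hQ : Q0 Q ≠ 0) : Function.Injective (danEmbedding Q) :=
  (Ideal.injective_lift_iff _).mpr (ker_danToLaurent hQ)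

theorem danEmbedding_aeval_X0 (b : ℂ[X]) :
    danEmbedding Q (Polynomial.aeval (danProj Q 1 (X 0)) b) =
      Polynomial.C (Polynomial.toLaurent b) := by
  let f : ℂ[X] →ₐ[ℂ] ℂ[T;T⁻¹][X] := Polynomial.CAlgHom.comp Polynomial.toLaurentAlg
  have hf : f Polynomial.X = danEmbedding Q (danProj Q 1 (X 0)) := by simp [f]
  rw [← Polynomial.aeval_algHom_apply, ← hf, Polynomial.aeval_algHom_apply,
    Polynomial.aeval_X_left_apply]
  rfl

theorem danEmbedding_aeval_X2 (p : ℂ[X]) :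
    danEmbedding Q (Polynomial.aeval (danProj Q 1 (X 2)) p) =
      p.map (algebraMap ℂ ℂ[T;T⁻¹]) := by
  rw [← Polynomial.aeval_algHom_apply, danEmbedding_danProj, danToLaurent_X2,
    Polynomial.aeval_X_left_eq_map]

theorem C_T_one_ne_zero : (Polynomial.C (T 1) : ℂ[T;T⁻¹][X]) ≠ 0 :=
  left_ne_zero_of_mul_eq_one C_T_one_mul_C_T_neg_one

theorem exists_X0_pow_mul_eq_aeval_of_derivative_eq_zero (hQ : Q0 Q ≠ 0) {a : danRing Q 1}
    (h : Polynomial.derivative (danEmbedding Q a) = 0) :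
    ∃ (n : ℕ) (b : ℂ[X]),
      danProj Q 1 (X 0) ^ n * a = Polynomial.aeval (danProj Q 1 (X 0)) b := by
  obtain ⟨n, b, hb⟩ := LaurentPolynomial.exists_T_pow ((danEmbedding Q a).coeff 0)
  refine ⟨n, b, danEmbedding_injective hQ ?_⟩
  rw [danEmbedding_aeval_X0, hb, map_mul, map_pow, danEmbedding_danProj, danToLaurent_X0,
    Polynomial.eq_C_of_derivative_eq_zero h, ← Polynomial.C_pow, ← Polynomial.C_mul,
    Polynomial.coeff_C_zero, LaurentPolynomial.T_pow, mul_one, mul_comm]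

theorem coeff_zero_eq_zero_of_X0_mul_eq_aeval (hQ : 0 < (Q0 Q).natDegree) {a : danRing Q 1}
    {b : ℂ[X]} (h : danProj Q 1 (X 0) * a = Polynomial.aeval (danProj Q 1 (X 0)) b) :
    b.coeff 0 = 0 := by
  obtain ⟨z₀, hz₀⟩ := Complex.exists_root (Polynomial.natDegree_pos_iff_degree_pos.mp hQ)
  have hQz₀ : aeval ![0, 0, z₀] (danPoly Q 1) = 0 := by
    have hQ0 := map_eq_aeval_Q0_of_map_X0_eq_zero ((aeval ![0, 0, z₀]).comp toXYZ) (by simp) Q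
    simp_all [danPoly]
  let ev : danRing Q 1 →ₐ[ℂ] ℂ := Ideal.Quotient.liftₐ _ (aeval ![0, 0, z₀])
    fun _ ha => (Ideal.span_singleton_le_iff_mem (RingHom.ker (aeval ![0, 0, z₀]))).mpr hQz₀ ha
  have hx : ev (danProj Q 1 (X 0)) = 0 := show aeval ![(0 : ℂ), 0, z₀] (X 0 : R3) = 0 by simp
  have := congrArg ev h
  rw [map_mul, ← Polynomial.aeval_algHom_apply, hx, zero_mul,
    ← Polynomial.coeff_zero_eq_aeval_zero'] at this
  simpa using this.symm

theorem exists_eq_aeval_of_X0_mul_eq_aeval (hQ : 0 < (Q0 Q).natDegree) {a : danRing Q 1}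
    {b : ℂ[X]} (h : danProj Q 1 (X 0) * a = Polynomial.aeval (danProj Q 1 (X 0)) b) :
    ∃ b' : ℂ[X], a = Polynomial.aeval (danProj Q 1 (X 0)) b' := by
  obtain ⟨b', rfl⟩ := Polynomial.X_dvd_iff.mpr (coeff_zero_eq_zero_of_X0_mul_eq_aeval hQ h)
  refine ⟨b', danEmbedding_injective (Polynomial.ne_zero_of_natDegree_gt hQ) ?_⟩
  rw [map_mul, Polynomial.aeval_X] at h
  have := congrArg (danEmbedding Q) h
  rw [map_mul, map_mul, danEmbedding_danProj, danToLaurent_X0] at this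
  exact mul_left_cancel₀ C_T_one_ne_zero this

theorem exists_eq_aeval_of_X0_pow_mul_eq_aeval (hQ : 0 < (Q0 Q).natDegree) {a : danRing Q 1}
    {n : ℕ} {b : ℂ[X]}
    (h : danProj Q 1 (X 0) ^ n * a = Polynomial.aeval (danProj Q 1 (X 0)) b) :
    ∃ b' : ℂ[X], a = Polynomial.aeval (danProj Q 1 (X 0)) b' := by
  induction n generalizing a with
  | zero => exact ⟨b, by rwa [pow_zero, one_mul] at h⟩
  | succ n ih =>
    obtain ⟨c, hc⟩ := ih (a := danProj Q 1 (X 0) * a) (by rwa [← mul_assoc, ← pow_succ])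
    exact exists_eq_aeval_of_X0_mul_eq_aeval hQ hc

end DanEmbedding

/-- `x ∂_z + Q_z(x,z) ∂_y` -/
def lnd₁ (Q : R2) : Derivation ℂ R3 R3 :=
  mkDerivation ℂ ![0, toXYZ (pderiv 1 Q), X 0]

/-- `p'(z) ∂_x + w ∂_z + (r_x p'(z) + r_z w) ∂_y` with `w = y - r(x,z)`. When
`Q = p(z) + x r(x,z)`, the surface is `x w = p(z)` in the coordinates `(x, w, z)`, and this
derivation is `p'(z) ∂_x + w ∂_z` there. -/
def lnd₂ (p : ℂ[X]) (r : R2) : Derivation ℂ R3 R3 :=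
  mkDerivation ℂ ![Polynomial.aeval (X 2) (Polynomial.derivative p),
    toXYZ (pderiv 0 r) * Polynomial.aeval (X 2) (Polynomial.derivative p) +
      toXYZ (pderiv 1 r) * (X 1 - toXYZ r),
    X 1 - toXYZ r]

theorem Derivation.map_toXYZ (δ : Derivation ℂ R3 R3) (F : R2) :
    δ (toXYZ F) = toXYZ (pderiv 0 F) * δ (X 0) + toXYZ (pderiv 1 F) * δ (X 2) := by
  rw [toXYZ, Derivation.map_mvPolynomial_aeval, Fin.sum_univ_two]
  simp

section Derivations

variable (Q : R2) (p : ℂ[X]) (r : R2)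

@[simp] theorem lnd₁_X0 : lnd₁ Q (X 0) = 0 := mkDerivation_X _ _ _
@[simp] theorem lnd₁_X1 : lnd₁ Q (X 1) = toXYZ (pderiv 1 Q) := mkDerivation_X _ _ _
@[simp] theorem lnd₁_X2 : lnd₁ Q (X 2) = X 0 := mkDerivation_X _ _ _

theorem lnd₁_danPoly : lnd₁ Q (danPoly Q 1) = 0 := by
  simp [danPoly, Derivation.map_toXYZ, mul_comm]

theorem isLND_lnd₁ : IsLND (lnd₁ Q) := by
  have h0 : X 0 ∈ (lnd₁ Q).nilpotentSubalgebra := ⟨1, lnd₁_X0 Q⟩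
  have h2 : X 2 ∈ (lnd₁ Q).nilpotentSubalgebra :=
    Derivation.mem_nilpotentSubalgebra_of_map_mem _ (by rwa [lnd₁_X2])
  have h1 : X 1 ∈ (lnd₁ Q).nilpotentSubalgebra := by
    refine Derivation.mem_nilpotentSubalgebra_of_map_mem _ ?_
    rw [lnd₁_X1]
    exact Subalgebra.mvPolynomial_aeval_mem _ (fun i => by fin_cases i <;> assumption) _
  refine isLND_of_X_mem_nilpotentSubalgebra fun i => ?_
  fin_cases i
  exacts [h0, h1, h2]

@[simp] theorem lnd₂_X0 : lnd₂ p r (X 0) = Polynomial.aeval (X 2) (Polynomial.derivative p) :=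
  mkDerivation_X _ _ _
@[simp] theorem lnd₂_X1 : lnd₂ p r (X 1) =
    toXYZ (pderiv 0 r) * Polynomial.aeval (X 2) (Polynomial.derivative p) +
      toXYZ (pderiv 1 r) * (X 1 - toXYZ r) :=
  mkDerivation_X _ _ _
@[simp] theorem lnd₂_X2 : lnd₂ p r (X 2) = X 1 - toXYZ r := mkDerivation_X _ _ _

theorem lnd₂_X1_sub_toXYZ : lnd₂ p r (X 1 - toXYZ r) = 0 := by
  simp [Derivation.map_toXYZ]

theorem lnd₂_danPoly {Q : R2} (hQr : Q = Polynomial.aeval (X 1) p + X 0 * r) :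
    lnd₂ p r (danPoly Q 1) = 0 := by
  have : danPoly Q 1 = X 0 * (X 1 - toXYZ r) - Polynomial.aeval (X 2) p := by
    rw [danPoly, hQr, map_add, map_mul, ← Polynomial.aeval_algHom_apply, toXYZ_X0, toXYZ_X1]
    ring
  rw [this, map_sub, Derivation.leibniz, lnd₂_X1_sub_toXYZ, Derivation.map_aeval]
  simp [mul_comm]

theorem isLND_lnd₂ : IsLND (lnd₂ p r) := by
  have hw : X 1 - toXYZ r ∈ (lnd₂ p r).nilpotentSubalgebra := ⟨1, lnd₂_X1_sub_toXYZ p r⟩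
  have h2 : X 2 ∈ (lnd₂ p r).nilpotentSubalgebra :=
    Derivation.mem_nilpotentSubalgebra_of_map_mem _ (by rwa [lnd₂_X2])
  have h0 : X 0 ∈ (lnd₂ p r).nilpotentSubalgebra :=
    Derivation.mem_nilpotentSubalgebra_of_map_mem _
      (by rw [lnd₂_X0]; exact Subalgebra.polynomial_aeval_mem _ h2 _)
  have hr : toXYZ r ∈ (lnd₂ p r).nilpotentSubalgebra :=
    Subalgebra.mvPolynomial_aeval_mem _ (fun i => by fin_cases i <;> assumption) _
  have h1 : X 1 ∈ (lnd₂ p r).nilpotentSubalgebra := by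
    simpa using Subalgebra.add_mem _ hw hr
  refine isLND_of_X_mem_nilpotentSubalgebra fun i => ?_
  fin_cases i
  exacts [h0, h1, h2]

theorem danToLaurent_lnd₁ (f : R3) :
    danToLaurent Q (lnd₁ Q f) =
      Polynomial.C (T 1) * Polynomial.derivative (danToLaurent Q f) := by
  induction f using MvPolynomial.induction_on with
  | C a => simp
  | add f g hf hg => simp [hf, hg, mul_add]
  | mul_X f i hf =>
    have hX : danToLaurent Q (lnd₁ Q (X i)) =
        Polynomial.C (T 1) * Polynomial.derivative (danToLaurent Q (X i)) := by
      fin_cases i <;>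
        simp [derivative_bivariateToLaurent, ← mul_assoc, C_T_one_mul_C_T_neg_one]
    rw [Derivation.leibniz, smul_eq_mul, smul_eq_mul, map_add, map_mul, map_mul, hf, hX, map_mul,
      Polynomial.derivative_mul]
    ring

end Derivations

def danLND₁ (Q : R2) : Derivation ℂ (danRing Q 1) (danRing Q 1) :=
  (lnd₁ Q).quotient _ <| (lnd₁ Q).map_mem_span_singleton <| by
    rw [lnd₁_danPoly]; exact zero_mem _

def danLND₂ {Q : R2} {p : ℂ[X]} {r : R2} (hQr : Q = Polynomial.aeval (X 1) p + X 0 * r) :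
    Derivation ℂ (danRing Q 1) (danRing Q 1) :=
  (lnd₂ p r).quotient _ <| (lnd₂ p r).map_mem_span_singleton <| by
    rw [lnd₂_danPoly p r hQr]; exact zero_mem _

section QuotientDerivations

variable {Q : R2} {p : ℂ[X]} {r : R2}

theorem isLND_danLND₁ (Q : R2) : IsLND (danLND₁ Q) := (isLND_lnd₁ Q).quotient _ _

theorem isLND_danLND₂ (hQr : Q = Polynomial.aeval (X 1) p + X 0 * r) : IsLND (danLND₂ hQr) :=
  (isLND_lnd₂ p r).quotient _ _

theorem exists_eq_aeval_X0_of_danLND₁_eq_zero (hQ : 0 < (Q0 Q).natDegree) {a : danRing Q 1}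
    (h : danLND₁ Q a = 0) : ∃ b : ℂ[X], a = Polynomial.aeval (danProj Q 1 (X 0)) b := by
  have hQ0 : Q0 Q ≠ 0 := Polynomial.ne_zero_of_natDegree_gt hQ
  have hder : Polynomial.derivative (danEmbedding Q a) = 0 := by
    obtain ⟨f, rfl⟩ := Ideal.Quotient.mk_surjective a
    have := congrArg (danEmbedding Q) h
    rw [map_zero] at this
    exact (mul_eq_zero.mp ((danToLaurent_lnd₁ Q f).symm.trans this)).resolve_left
      C_T_one_ne_zero
  obtain ⟨n, b, hb⟩ := exists_X0_pow_mul_eq_aeval_of_derivative_eq_zero hQ0 hder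
  exact exists_eq_aeval_of_X0_pow_mul_eq_aeval hQ hb

theorem derivative_eq_zero_of_danLND₂_aeval_X0_eq_zero
    (hQr : Q = Polynomial.aeval (X 1) p + X 0 * r) (hp : Polynomial.derivative p ≠ 0) {b : ℂ[X]}
    (h : danLND₂ hQr (Polynomial.aeval (danProj Q 1 (X 0)) b) = 0) :
    Polynomial.derivative b = 0 := by
  have hX0 : danLND₂ hQr (danProj Q 1 (X 0)) =
      Polynomial.aeval (danProj Q 1 (X 2)) (Polynomial.derivative p) := by
    rw [Polynomial.aeval_algHom_apply, ← lnd₂_X0 p r]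
    rfl
  have := congrArg (danEmbedding Q) h
  rw [Derivation.map_aeval, hX0, smul_eq_mul, map_mul, danEmbedding_aeval_X0,
    danEmbedding_aeval_X2, map_zero, mul_eq_zero, Polynomial.C_eq_zero,
    map_eq_zero_iff _ Polynomial.toLaurent_injective,
    Polynomial.map_eq_zero_iff (algebraMap ℂ _).injective] at this
  exact this.resolve_right hp

end QuotientDerivations

/-- For `n = 1`, the Makar-Limanov invariant of `S_{Q,1}` is `ℂ`. -/
theorem stmt_0 (Q : R2) (hQ : 2 ≤ (Q0 Q).natDegree) :
    {a : danRing Q 1 |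
        ∀ δ : Derivation ℂ (danRing Q 1) (danRing Q 1), IsLND δ → δ a = 0} =
      Set.range (algebraMap ℂ (danRing Q 1)) := by
  have hpos : 0 < (Q0 Q).natDegree := by omega
  have hp : Polynomial.derivative (Q0 Q) ≠ 0 := by
    rw [Ne, Polynomial.derivative_eq_zero]
    omega
  obtain ⟨r, hr⟩ := exists_eq_aeval_Q0_add_X0_mul Q
  refine Set.Subset.antisymm (fun a ha => ?_) ?_
  · obtain ⟨b, rfl⟩ := exists_eq_aeval_X0_of_danLND₁_eq_zero hpos (ha _ (isLND_danLND₁ Q))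
    have hb := derivative_eq_zero_of_danLND₂_aeval_X0_eq_zero hr hp (ha _ (isLND_danLND₂ hr))
    exact ⟨b.coeff 0, by rw [Polynomial.eq_C_of_derivative_eq_zero hb, Polynomial.aeval_C,
      Polynomial.coeff_C_zero]⟩
  · rintro _ ⟨c, rfl⟩ δ -
    exact δ.map_algebraMap c
end
end

section
/- Let n ≥ 1 be an integer and Q₁(x,z), Q₂(x,z) ∈ ℂ[x,z] polynomials with deg_z Q₁(0,z) ≥ 2 and deg_z Q₂(0,z) ≥ 2, and suppose Q₂(x,z) = (1 + x·π(x,z))·Q₁(x,z) + x^n·R(x,z) for some polynomials π(x,z), R(x,z) ∈ ℂ[x,z]. Then the ℂ-algebra endomorphism Φ of ℂ[x,y,z] determined by Φ(x) = x, Φ(y) = (1 + x·π(x,z))·y + R(x,z), Φ(z) = z satisfies Φ(x^n y − Q₂(x,z)) = (1 + x·π(x,z))·(x^n y − Q₁(x,z)), and it induces a ℂ-algebra isomorphism from S_{Q₂,n} = ℂ[x,y,z]/(x^n y − Q₂(x,z)) onto S_{Q₁,n} = ℂ[x,y,z]/(x^n y − Q₁(x,z)). -/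
/-!
Write `u = 1 + x π`. As `x π` is nilpotent modulo `xⁿ`, a geometric series gives
`u v = 1 + xⁿ s`, and then also `Q₁ = v Q₂ + xⁿ t`. So the substitution `y ↦ v y + t` induces a
map `S_{Q₁,n} → S_{Q₂,n}`, and both composites with `y ↦ u y + R` are substitutions
`y ↦ (1 + xⁿ s) y - s Q = y + s (xⁿ y - Q)`, which induce the identity on `S_{Q,n}`.
-/

open MvPolynomial

noncomputable section

theorem exists_inverse_one_add_mul_mod_pow {A : Type*} [CommRing A] (a b : A) (n : ℕ) :
    ∃ c s : A, (1 + a * b) * (1 + a * c) = 1 + a ^ n * s := by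
  refine ⟨-b * ∑ k ∈ Finset.range n, (-(a * b)) ^ k, -(a * (-b) ^ (n + 1)), ?_⟩
  have hgeom : 1 + a * (-b * ∑ k ∈ Finset.range n, (-(a * b)) ^ k) =
      ∑ k ∈ Finset.range (n + 1), (-(a * b)) ^ k := by
    rw [geom_sum_succ]; ring
  rw [hgeom, ← sub_neg_eq_add 1 (a * b), mul_neg_geom_sum]
  ring

theorem exists_eq_mul_add_pow_mul_of_mul_eq {A : Type*} [CommRing A] {x u v s q₁ q₂ r : A}
    {n : ℕ} (hq : q₂ = u * q₁ + x ^ n * r) (huv : u * v = 1 + x ^ n * s) :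
    ∃ t, q₁ = v * q₂ + x ^ n * t :=
  ⟨-(s * q₁) - v * r, by linear_combination (-q₁) * huv - v * hq⟩

namespace Danielewski

@[simp]
lemma toXYZ_X_zero : toXYZ (X 0) = X 0 := by simp [toXYZ]

def affineY (u r : R2) : R3 →ₐ[ℂ] R3 := aeval ![X 0, toXYZ u * X 1 + toXYZ r, X 2]

@[simp] lemma affineY_X_zero (u r : R2) : affineY u r (X 0) = X 0 := by simp [affineY]

@[simp] lemma affineY_X_one (u r : R2) : affineY u r (X 1) = toXYZ u * X 1 + toXYZ r := by
  simp [affineY]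

@[simp] lemma affineY_X_two (u r : R2) : affineY u r (X 2) = X 2 := by simp [affineY]

lemma affineY_comp_toXYZ (u r : R2) : (affineY u r).comp toXYZ = toXYZ := by
  refine MvPolynomial.algHom_ext fun i => ?_
  fin_cases i <;> simp [toXYZ]

@[simp] lemma affineY_toXYZ (u r q : R2) : affineY u r (toXYZ q) = toXYZ q :=
  AlgHom.congr_fun (affineY_comp_toXYZ u r) q

lemma affineY_comp_affineY (u r v t : R2) :
    (affineY u r).comp (affineY v t) = affineY (v * u) (v * r + t) := by
  refine MvPolynomial.algHom_ext fun i => ?_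
  fin_cases i
  · simp
  · simp only [Fin.mk_one, AlgHom.coe_comp, Function.comp_apply, affineY_X_one, map_add,
      map_mul, affineY_toXYZ]
    ring
  · simp

variable {n : ℕ} {Q Q₁ Q₂ Q₃ u r v t : R2}

lemma affineY_danPoly (hQ : Q₂ = u * Q₁ + X 0 ^ n * r) :
    affineY u r (danPoly Q₂ n) = toXYZ u * danPoly Q₁ n := by
  simp only [danPoly, hQ, map_sub, map_mul, map_pow, map_add, affineY_X_zero, affineY_X_one,
    affineY_toXYZ, toXYZ_X_zero]
  ring

def danHom (hQ : Q₂ = u * Q₁ + X 0 ^ n * r) : danRing Q₂ n →ₐ[ℂ] danRing Q₁ n :=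
  Ideal.quotientMapₐ _ (affineY u r) <| by
    rw [Ideal.span_le, Set.singleton_subset_iff, SetLike.mem_coe, Ideal.mem_comap,
      affineY_danPoly hQ]
    exact Ideal.mul_mem_left _ _ (Ideal.mem_span_singleton_self _)

lemma danHom_danProj (hQ : Q₂ = u * Q₁ + X 0 ^ n * r) (f : R3) :
    danHom hQ (danProj Q₂ n f) = danProj Q₁ n (affineY u r f) :=
  rfl

lemma danHom_comp_danHom (hQ : Q₂ = u * Q₁ + X 0 ^ n * r) (hQ' : Q₃ = v * Q₂ + X 0 ^ n * t) :
    (danHom hQ).comp (danHom hQ') =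
      danHom (show Q₃ = (v * u) * Q₁ + X 0 ^ n * (v * r + t) by rw [hQ', hQ]; ring) := by
  refine Ideal.Quotient.algHom_ext _ (AlgHom.ext fun f => ?_)
  exact congrArg (danProj Q₁ n) (AlgHom.congr_fun (affineY_comp_affineY u r v t) f)

lemma danHom_eq_id {s : R2} (hQ : Q = u * Q + X 0 ^ n * r) (hu : u = 1 + X 0 ^ n * s) :
    danHom hQ = AlgHom.id ℂ (danRing Q n) := by
  have hr : r = -(s * Q) :=
    mul_left_cancel₀ (pow_ne_zero n (X_ne_zero 0)) (by linear_combination -hQ - Q * hu)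
  subst hu hr
  apply Ideal.Quotient.algHom_ext
  ext i
  change danProj Q n (affineY _ _ (X i)) = danProj Q n (X i)
  fin_cases i
  · simp
  · refine Ideal.Quotient.eq.mpr (Ideal.mem_span_singleton'.mpr ⟨toXYZ s, ?_⟩)
    simp only [danPoly, Fin.mk_one, affineY_X_one, map_add, map_one, map_mul, map_pow,
      toXYZ_X_zero, map_neg]
    ring
  · simp

def danEquiv {s : R2} (hQ : Q₂ = u * Q₁ + X 0 ^ n * r) (hQ' : Q₁ = v * Q₂ + X 0 ^ n * t)
    (huv : u * v = 1 + X 0 ^ n * s) : danRing Q₂ n ≃ₐ[ℂ] danRing Q₁ n :=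
  AlgEquiv.ofAlgHom (danHom hQ) (danHom hQ')
    ((danHom_comp_danHom hQ hQ').trans (danHom_eq_id _ (by rw [mul_comm, huv])))
    ((danHom_comp_danHom hQ' hQ).trans (danHom_eq_id _ huv))

end Danielewski

open Danielewski in
theorem stmt_11_general (n : ℕ) (Q₁ Q₂ : R2)
    (π R : R2) (hQ : Q₂ = (1 + X 0 * π) * Q₁ + X 0 ^ n * R) :
    (aeval ![X 0, (1 + X 0 * toXYZ π) * X 1 + toXYZ R, X 2] : R3 →ₐ[ℂ] R3)
        (danPoly Q₂ n) = (1 + X 0 * toXYZ π) * danPoly Q₁ n ∧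
    ∃ φ : danRing Q₂ n ≃ₐ[ℂ] danRing Q₁ n,
      ∀ f : R3,
        φ (danProj Q₂ n f) =
          danProj Q₁ n
            ((aeval ![X 0, (1 + X 0 * toXYZ π) * X 1 + toXYZ R, X 2] : R3 →ₐ[ℂ] R3) f) := by
  have hΦ : (aeval ![X 0, (1 + X 0 * toXYZ π) * X 1 + toXYZ R, X 2] : R3 →ₐ[ℂ] R3) =
      affineY (1 + X 0 * π) R := by
    simp [affineY]
  obtain ⟨σ, s, huv⟩ := exists_inverse_one_add_mul_mod_pow (X 0) π n
  obtain ⟨t, hQ'⟩ := exists_eq_mul_add_pow_mul_of_mul_eq hQ huv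
  rw [hΦ]
  refine ⟨?_, danEquiv hQ hQ' huv, danHom_danProj hQ⟩
  simpa only [map_add, map_one, map_mul, toXYZ_X_zero] using affineY_danPoly hQ

/-- if `Q₂ = (1 + x π) Q₁ + x^n R`, then the endomorphism
`(x,y,z) ↦ (x, (1 + x π) y + R, z)` of `ℂ[x,y,z]` maps `x^n y - Q₂` to
`(1 + x π)(x^n y - Q₁)` and induces an isomorphism `S_{Q₂,n} → S_{Q₁,n}`. -/
theorem stmt_11 (n : ℕ) (hn : 1 ≤ n) (Q₁ Q₂ : R2)
    (hQ₁ : 2 ≤ (Q0 Q₁).natDegree) (hQ₂ : 2 ≤ (Q0 Q₂).natDegree)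
    (π R : R2) (hQ : Q₂ = (1 + X 0 * π) * Q₁ + X 0 ^ n * R) :
    (aeval ![X 0, (1 + X 0 * toXYZ π) * X 1 + toXYZ R, X 2] : R3 →ₐ[ℂ] R3)
        (danPoly Q₂ n) = (1 + X 0 * toXYZ π) * danPoly Q₁ n ∧
    ∃ φ : danRing Q₂ n ≃ₐ[ℂ] danRing Q₁ n,
      ∀ f : R3,
        φ (danProj Q₂ n f) =
          danProj Q₁ n
            ((aeval ![X 0, (1 + X 0 * toXYZ π) * X 1 + toXYZ R, X 2] : R3 →ₐ[ℂ] R3) f) :=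
  stmt_11_general n Q₁ Q₂ π R hQ
end
end
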